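/- Let (F, ||·||_F) be a complex Banach space, V a bounded open sector centered at 0 in ℂ, q > 1 a real number and k ≥ 1 an integer. A holomorphic function f : V → F admits the null formal power series 0 ∈ F[[eps]] as its q-Gevrey asymptotic expansion of order 1/k if and only if for every open subsector U of V whose closure is contained in V ∪ {0}, there exist constants K ∈ ℝ and M > 0 such that ||f(eps)||_F ≤ M exp( −(k/(2 log q)) log^2 |eps| ) |eps|^K for all eps ∈ U. -/

import Mathlib

/-!
With `L = log q`, `t = log |ε|` and `m = N + 1`, the logarithm of the `N`-th Gevrey bound
`C A^m q^(m(m-1)/(2k)) |ε|^m` is a quadratic polynomial in `m` with leading coefficient `L/(2k)`,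
and its minimum over real `m` is `-(k/(2L)) t² + K t + const`, i.e. the logarithm of
`exp(-(k/(2L)) log²|ε|) |ε|^K`. Hence the Gaussian bound lies below every Gevrey bound, and
conversely some integer `m ≥ 1` within a bounded distance of the minimiser (bounded below, since
`|ε| < r`) brings the Gevrey bound within a constant factor of the Gaussian one.
-/

/-- An open (bounded if `r < ∞`) sector centered at the origin, of radius `r`,
with arguments ranging in `(θ1, θ2)`. -/
def planarSector (θ1 θ2 r : ℝ) : Set ℂ :=
  {z : ℂ | ∃ ρ θ : ℝ, 0 < ρ ∧ ρ < r ∧ θ1 < θ ∧ θ < θ2 ∧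
    z = (ρ : ℂ) * Complex.exp ((θ : ℂ) * Complex.I)}

/-- `f : V → F` admits `Σ fn n ε^n` as q-Gevrey asymptotic expansion of order `1/kk` on `V`. -/
def qAsymp {F : Type*} [NormedAddCommGroup F] [NormedSpace ℂ F]
    (q kk : ℝ) (V : Set ℂ) (f : ℂ → F) (fn : ℕ → F) : Prop :=
  ∀ θ1 θ2 r : ℝ, planarSector θ1 θ2 r ⊆ V →
    closure (planarSector θ1 θ2 r) ⊆ V ∪ {0} →
    ∃ A C : ℝ, 0 < A ∧ 0 < C ∧
      ∀ N : ℕ, ∀ eps ∈ planarSector θ1 θ2 r,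
        ‖f eps - ∑ n ∈ Finset.range (N + 1), eps ^ n • fn n‖
          ≤ C * A ^ (N + 1) * q ^ (((N : ℝ) + 1) * N / (2 * kk)) * ‖eps‖ ^ (N + 1)

open Real

/-- The logarithm of `A ^ (n + 1) * q ^ ((n + 1) * n / (2 * κ)) * x ^ (n + 1)`, where
`L = log q`, `a = log A` and `t = log x`. -/
noncomputable def gevreyExponent (L κ a t n : ℝ) : ℝ :=
  (n + 1) * a + L * ((n + 1) * n / (2 * κ)) + (n + 1) * t

lemma gevreyExponent_eq (L κ a t n : ℝ) (hL : L ≠ 0) (hκ : κ ≠ 0) :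
    gevreyExponent L κ a t n = L / (2 * κ) * (n + 1 + κ * (t + (a - L / (2 * κ))) / L) ^ 2
      - κ / (2 * L) * (t + (a - L / (2 * κ))) ^ 2 := by
  unfold gevreyExponent
  field_simp
  ring

lemma gevrey_bound_eq_exp {q A x : ℝ} (hq : 0 < q) (hA : 0 < A) (hx : 0 < x) (C κ : ℝ) (N : ℕ) :
    C * A ^ (N + 1) * q ^ (((N : ℝ) + 1) * N / (2 * κ)) * x ^ (N + 1)
      = C * exp (gevreyExponent (log q) κ (log A) (log x) N) := by
  rw [gevreyExponent, exp_add, exp_add, rpow_def_of_pos hq]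
  nth_rw 1 [← exp_log hA, ← exp_log hx]
  rw [← exp_nat_mul, ← exp_nat_mul]
  push_cast
  ring

lemma logGaussian_bound_eq_exp {x : ℝ} (hx : 0 < x) (M c K : ℝ) :
    M * exp (-c * log x ^ 2) * x ^ K = M * exp (-c * log x ^ 2 + K * log x) := by
  rw [rpow_def_of_pos hx, exp_add, mul_comm K, mul_assoc]

lemma natCeil_add_one_sub_le {y R : ℝ} (hR : 0 ≤ R) (hy : -R ≤ y) :
    |(⌈y⌉₊ : ℝ) + 1 - y| ≤ R + 2 := by
  rcases le_or_gt 0 y with hy0 | hy0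
  · rw [abs_of_nonneg (by linarith [Nat.le_ceil y])]
    linarith [Nat.ceil_lt_add_one hy0]
  · rw [Nat.ceil_eq_zero.mpr hy0.le, Nat.cast_zero, abs_of_pos (by linarith)]
    linarith

section

variable {L κ : ℝ} (hL : 0 < L) (hκ : 0 < κ)
include hL hκ

lemma neg_sq_le_gevreyExponent (a t n : ℝ) :
    -(κ / (2 * L)) * (t + (a - L / (2 * κ))) ^ 2 ≤ gevreyExponent L κ a t n := by
  rw [gevreyExponent_eq L κ a t n hL.ne' hκ.ne']
  nlinarith [show 0 ≤ L / (2 * κ) * (n + 1 + κ * (t + (a - L / (2 * κ))) / L) ^ 2 by positivity]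

lemma exists_gevreyExponent_le (a T : ℝ) :
    ∃ K D : ℝ, ∀ t ≤ T, ∃ N : ℕ,
      gevreyExponent L κ a t N ≤ D + (-(κ / (2 * L)) * t ^ 2 + K * t) := by
  set b := a - L / (2 * κ)
  set R := |κ * (T + b) / L|
  refine ⟨-(κ / L) * b, L / (2 * κ) * (R + 2) ^ 2, fun t ht => ?_⟩
  -- the quadratic `n ↦ gevreyExponent L κ a t n` is minimal at `n + 1 = y`
  set y := -(κ * (t + b) / L)
  have hy : -R ≤ y := by
    have : κ * (t + b) / L ≤ κ * (T + b) / L := by gcongr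
    linarith [le_abs_self (κ * (T + b) / L)]
  refine ⟨⌈y⌉₊, ?_⟩
  have hdist : ((⌈y⌉₊ : ℝ) + 1 - y) ^ 2 ≤ (R + 2) ^ 2 :=
    sq_le_sq.mpr ((natCeil_add_one_sub_le (abs_nonneg _) hy).trans (le_abs_self _))
  have hshift : (⌈y⌉₊ : ℝ) + 1 + κ * (t + b) / L = (⌈y⌉₊ : ℝ) + 1 - y := by ring
  have hgauss : κ / (2 * L) * (t + b) ^ 2
      = κ / (2 * L) * t ^ 2 + κ / L * b * t + κ / (2 * L) * b ^ 2 := by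
    field_simp
    ring
  have hb2 : 0 ≤ κ / (2 * L) * b ^ 2 := by positivity
  rw [gevreyExponent_eq L κ a t _ hL.ne' hκ.ne', hshift]
  nlinarith [mul_le_mul_of_nonneg_left hdist (by positivity : 0 ≤ L / (2 * κ))]

end

theorem exists_logGaussian_bound_ge_gevrey {q κ A C : ℝ} (hq : 1 < q) (hκ : 0 < κ) (hA : 0 < A)
    (hC : 0 < C) (r : ℝ) :
    ∃ K M : ℝ, 0 < M ∧ ∀ x : ℝ, 0 < x → x ≤ r → ∃ N : ℕ,
      C * A ^ (N + 1) * q ^ (((N : ℝ) + 1) * N / (2 * κ)) * x ^ (N + 1)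
        ≤ M * exp (-(κ / (2 * log q)) * log x ^ 2) * x ^ K := by
  obtain ⟨K, D, hD⟩ := exists_gevreyExponent_le (log_pos hq) hκ (log A) (log r)
  refine ⟨K, C * exp D, by positivity, fun x hx hxr => ?_⟩
  obtain ⟨N, hN⟩ := hD (log x) (log_le_log hx hxr)
  refine ⟨N, ?_⟩
  rw [gevrey_bound_eq_exp (by linarith) hA hx, logGaussian_bound_eq_exp hx, mul_assoc, ← exp_add]
  gcongr

theorem exists_gevrey_bound_ge_logGaussian {q κ M : ℝ} (hq : 1 < q) (hκ : 0 < κ) (hM : 0 < M)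
    (K : ℝ) :
    ∃ A C : ℝ, 0 < A ∧ 0 < C ∧ ∀ x : ℝ, 0 < x → ∀ N : ℕ,
      M * exp (-(κ / (2 * log q)) * log x ^ 2) * x ^ K
        ≤ C * A ^ (N + 1) * q ^ (((N : ℝ) + 1) * N / (2 * κ)) * x ^ (N + 1) := by
  set L := log q
  have hL : 0 < L := log_pos hq
  -- this choice of `log A` matches the terms linear in `log x` on both sides
  set a := L / (2 * κ) - K * L / κ
  refine ⟨exp a, M * exp (K ^ 2 * L / (2 * κ)), exp_pos a, by positivity, fun x hx N => ?_⟩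
  have hsq : -(κ / (2 * L)) * log x ^ 2 + K * log x
      = K ^ 2 * L / (2 * κ) + -(κ / (2 * L)) * (log x + (a - L / (2 * κ))) ^ 2 := by
    simp only [a]
    field_simp
    ring
  rw [gevrey_bound_eq_exp (by linarith) (exp_pos a) hx, log_exp, logGaussian_bound_eq_exp hx, hsq,
    exp_add, mul_assoc M]
  gcongr
  exact neg_sq_le_gevreyExponent hL hκ a (log x) N

lemma norm_mem_Ioo_of_mem_planarSector {θ1 θ2 r : ℝ} {z : ℂ} (hz : z ∈ planarSector θ1 θ2 r) :
    ‖z‖ ∈ Set.Ioo 0 r := by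
  obtain ⟨ρ, θ, hρ, hρr, -, -, rfl⟩ := hz
  rwa [norm_mul, Complex.norm_exp_ofReal_mul_I, mul_one, Complex.norm_real, Real.norm_eq_abs,
    abs_of_pos hρ, Set.mem_Ioo, and_iff_right hρ]

theorem stmt_10_general {F : Type*} [NormedAddCommGroup F] [NormedSpace ℂ F]
    (q : ℝ) (hq : 1 < q) (k : ℕ) (hk : 1 ≤ k)
    (θ1 θ2 r : ℝ)
    (f : ℂ → F) :
    qAsymp q k (planarSector θ1 θ2 r) f (fun _ => 0) ↔
      (∀ θ1' θ2' r' : ℝ, planarSector θ1' θ2' r' ⊆ planarSector θ1 θ2 r →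
        closure (planarSector θ1' θ2' r') ⊆ planarSector θ1 θ2 r ∪ {0} →
        ∃ K : ℝ, ∃ M : ℝ, 0 < M ∧
          ∀ eps ∈ planarSector θ1' θ2' r',
            ‖f eps‖ ≤ M * Real.exp (-((k : ℝ) / (2 * Real.log q)) * (Real.log ‖eps‖) ^ 2)
              * ‖eps‖ ^ K) := by
  have hκ : (0 : ℝ) < k := by exact_mod_cast hk
  simp only [qAsymp, smul_zero, Finset.sum_const_zero, sub_zero]
  constructor
  · intro h θ1' θ2' r' hsub hcl
    obtain ⟨A, C, hA, hC, hf⟩ := h θ1' θ2' r' hsub hcl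
    obtain ⟨K, M, hM, hbound⟩ := exists_logGaussian_bound_ge_gevrey hq hκ hA hC r'
    refine ⟨K, M, hM, fun eps heps => ?_⟩
    obtain ⟨hε0, hεr⟩ := norm_mem_Ioo_of_mem_planarSector heps
    obtain ⟨N, hN⟩ := hbound ‖eps‖ hε0 hεr.le
    exact (hf N eps heps).trans hN
  · intro h θ1' θ2' r' hsub hcl
    obtain ⟨K, M, hM, hf⟩ := h θ1' θ2' r' hsub hcl
    obtain ⟨A, C, hA, hC, hbound⟩ := exists_gevrey_bound_ge_logGaussian hq hκ hM K
    exact ⟨A, C, hA, hC, fun N eps heps =>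
      (hf eps heps).trans (hbound ‖eps‖ (norm_mem_Ioo_of_mem_planarSector heps).1 N)⟩

theorem stmt_10 {F : Type*} [NormedAddCommGroup F] [NormedSpace ℂ F]
    (q : ℝ) (hq : 1 < q) (k : ℕ) (hk : 1 ≤ k)
    (θ1 θ2 r : ℝ) (hθ : θ1 < θ2) (hθ2 : θ2 - θ1 ≤ 2 * Real.pi) (hr : 0 < r)
    (f : ℂ → F) (hf : DifferentiableOn ℂ f (planarSector θ1 θ2 r)) :
    qAsymp q k (planarSector θ1 θ2 r) f (fun _ => 0) ↔
      (∀ θ1' θ2' r' : ℝ, planarSector θ1' θ2' r' ⊆ planarSector θ1 θ2 r →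
        closure (planarSector θ1' θ2' r') ⊆ planarSector θ1 θ2 r ∪ {0} →
        ∃ K : ℝ, ∃ M : ℝ, 0 < M ∧
          ∀ eps ∈ planarSector θ1' θ2' r',
            ‖f eps‖ ≤ M * Real.exp (-((k : ℝ) / (2 * Real.log q)) * (Real.log ‖eps‖) ^ 2)
              * ‖eps‖ ^ K) :=
  stmt_10_general q hq k hk θ1 θ2 r f
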